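/- Reynolds' mutation rule holds in the concrete store-heap model: {(e ↦ −) * r} (@e := e') {(e ↦ e') * r}, where the mutation (@e := e') acts on states by (s,h) ↦ (s, h[e ↦ e']), lifted to the predicate transformer λq. q ∘ (@e := e'). -/
import Mathlib


/-- Concrete heaps: partial functions from naturals to naturals. -/
abbrev Heap : Type := ℕ → Option ℕ

/-- Disjointness of heaps. -/
def hdisj (h₁ h₂ : Heap) : Prop := ∀ n, h₁ n = none ∨ h₂ n = none

/-- Union of (disjoint) heaps. -/
def hunion (h₁ h₂ : Heap) : Heap := fun n => (h₁ n).orElse fun _ => h₂ n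

/-- Separating conjunction on predicates over states `(s, h) : S × Heap`:
the heap splits into two disjoint parts satisfying `p` and `q` respectively. -/
def sep {S : Type*} (p q : Set (S × Heap)) : Set (S × Heap) :=
  {σ | ∃ h₁ h₂, hdisj h₁ h₂ ∧ σ.2 = hunion h₁ h₂ ∧ (σ.1, h₁) ∈ p ∧ (σ.1, h₂) ∈ q}

/-- The singleton heap mapping `a` to `v`. -/
def singletonHeap (a v : ℕ) : Heap := fun n => if n = a then some v else none

/-- `e ↦ e'`: the predicate holding exactly of the singleton heap mapping the
value of `e` to the value of `e'`. -/
def pointsTo {S : Type*} (e e' : S → ℕ) : Set (S × Heap) :=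
  {σ | σ.2 = singletonHeap (e σ.1) (e' σ.1)}

/-- `e ↦ −`: the predicate holding of singleton heaps at `e` with any value. -/
def pointsToAny {S : Type*} (e : S → ℕ) : Set (S × Heap) :=
  {σ | ∃ v, σ.2 = singletonHeap (e σ.1) v}

/-- The mutation `@e := e'` as a state-to-state function: `(s,h) ↦ (s, h[e ↦ e'])`. -/
def mutate {S : Type*} (e e' : S → ℕ) (σ : S × Heap) : S × Heap :=
  (σ.1, fun n => if n = e σ.1 then some (e' σ.1) else σ.2 n)

/-- Lifting of a state function to a predicate transformer: `[f] = λq. q ∘ f`. -/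
def liftPT {S : Type*} (f : S × Heap → S × Heap) : Set (S × Heap) → Set (S × Heap) :=
  fun q => {σ | f σ ∈ q}

/-- Hoare triple: `{p} F {q} ⟺ p ≤ F q`. -/
def Triple {S : Type*} (p : Set (S × Heap)) (F : Set (S × Heap) → Set (S × Heap))
    (q : Set (S × Heap)) : Prop := p ⊆ F q

/-- Reynolds' mutation rule in the concrete store-heap model:
`{(e ↦ −) * r} (@e := e') {(e ↦ e') * r}`. -/
theorem mutation_rule {S : Type*} (e e' : S → ℕ) (r : Set (S × Heap)) :
    Triple (sep (pointsToAny e) r) (liftPT (mutate e e')) (sep (pointsTo e e') r) := by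
  rintro ⟨s, h⟩ ⟨h₁, h₂, hd, hu, ⟨v, hv⟩, hr⟩
  replace hv : h₁ = singletonHeap (e s) v := hv
  subst hv
  refine ⟨singletonHeap (e s) (e' s), h₂, ?_, ?_, rfl, hr⟩
  · intro n
    rcases hd n with hn | hn
    · left
      simp only [singletonHeap] at hn ⊢
      split at hn <;> simp_all
    · exact Or.inr hn
  · funext n
    have hn : h n = hunion (singletonHeap (e s) v) h₂ n := congrFun hu n
    have h2a : h₂ (e s) = none := by
      rcases hd (e s) with hna | hna
      · simp [singletonHeap] at hna
      · exact hna
    simp only [mutate, hunion, singletonHeap] at hn ⊢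
    by_cases hne : n = e s <;> simp [hne, h2a] at hn ⊢ <;> simp_all
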